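/- Let F be a field equipped with a nonarchimedean absolute value |·|, let q ≥ 2 and d ≥ 1 be integers, let θ ∈ F with |θ| > 1, and let c_1,…,c_d ∈ F. Define e_0 = 1, e_j = 0 for j < 0, and e_n = (θ^{q^n} − θ)^{−1}·Σ_{l=1}^{d} c_l·e_{n−l}^{q^l} for n ≥ 1. Then there exist an integer n_0 ≥ 0 and a real number r with 0 < r < 1 such that |e_n| ≤ r^{n·q^n} for all n ≥ n_0. -/

import Mathlib

/-!
Write `|e n| ≤ b n ^ q ^ n`. Since `|θ ^ q ^ n - θ| = |θ| ^ q ^ n` and the ultrametric inequality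
singles out one term of the recursion, `|e n| ≤ |c l| |θ| ^ (-q ^ n) |e (n - l)| ^ q ^ l` for some
`1 ≤ l ≤ d`. The factor `|c l|` is harmless once `(ρ ^ d |θ|) ^ q ^ n` exceeds it, where `ρ < 1` is
chosen with `ρ ^ d |θ| > 1`; from then on `b` shrinks by `ρ ^ d` within every `d` steps, so
`b n ≤ M ρ ^ (n - N)`, which is at most `√ρ ^ n` for large `n`.
-/

noncomputable section

/-- The exponential coefficients `e_n` attached to `θ`, `q` and the coefficients
`c : ℕ → F` (only `c 1, …, c d` are used); the guard `1 ≤ l ∧ l ≤ n+1` encodes the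
convention `e_j = 0` for `j < 0`. -/
def eRec (F : Type) [Field F] (q d : ℕ) (θ : F) (c : ℕ → F) : ℕ → F
  | 0 => 1
  | (n + 1) =>
      (θ ^ q ^ (n + 1) - θ)⁻¹ *
        ∑ l ∈ Finset.Icc 1 d,
          if h : 1 ≤ l ∧ l ≤ n + 1 then c l * (eRec F q d θ c (n + 1 - l)) ^ q ^ l else 0
  decreasing_by omega

open Filter Topology Finset

lemma exists_pos_lt_one_lt_pow {x : ℝ} (hx : x < 1) (d : ℕ) :
    ∃ ρ, 0 < ρ ∧ ρ < 1 ∧ x < ρ ^ d := by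
  have hpow : ∀ᶠ ρ in 𝓝[<] (1 : ℝ), x < ρ ^ d :=
    nhdsWithin_le_nhds <| (continuous_pow d).tendsto' 1 1 (one_pow d) |>.eventually_const_lt hx
  obtain ⟨ρ, hρ, hρ0, hρ1⟩ := (hpow.and (Ioo_mem_nhdsLT zero_lt_one)).exists
  exact ⟨ρ, hρ0, hρ1, hρ⟩

lemma exists_lt_one_eventually_mul_pow_sub_le_pow {ρ : ℝ} (hρ0 : 0 < ρ) (hρ1 : ρ < 1) (K : ℝ)
    (N : ℕ) : ∃ r, 0 < r ∧ r < 1 ∧ ∀ᶠ n in atTop, K * ρ ^ (n - N) ≤ r ^ n := by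
  have hsqrt : √ρ < 1 := by rw [Real.sqrt_lt' one_pos]; nlinarith
  have hsmall : ∀ᶠ n in atTop, K * √ρ ^ n ≤ ρ ^ N := by
    have := (tendsto_pow_atTop_nhds_zero_of_lt_one (Real.sqrt_nonneg ρ) hsqrt).const_mul K
    rw [mul_zero] at this
    exact this.eventually_le_const (pow_pos hρ0 N)
  refine ⟨√ρ, Real.sqrt_pos.mpr hρ0, hsqrt, ?_⟩
  filter_upwards [hsmall, eventually_ge_atTop N] with n hn hNn
  refine le_of_mul_le_mul_right ?_ (pow_pos hρ0 N)
  calc K * ρ ^ (n - N) * ρ ^ N = K * √ρ ^ n * √ρ ^ n := by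
        rw [mul_assoc, pow_sub_mul_pow _ hNn, mul_assoc, ← mul_pow, Real.mul_self_sqrt hρ0.le]
    _ ≤ ρ ^ N * √ρ ^ n := by gcongr
    _ = √ρ ^ n * ρ ^ N := mul_comm _ _

lemma le_mul_pow_sub_pow_of_le_pow_mul_pow {a : ℕ → ℝ} {q d N : ℕ} {ρ M : ℝ}
    (ha : ∀ n, 0 ≤ a n) (hρ0 : 0 ≤ ρ) (hρ1 : ρ ≤ 1) (hM : 0 ≤ M) (hdN : d ≤ N)
    (hinit : ∀ n < N, a n ≤ M ^ q ^ n)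
    (hrec : ∀ n, N ≤ n → ∃ l ∈ Icc 1 d, a n ≤ (ρ ^ d) ^ q ^ n * a (n - l) ^ q ^ l) (n : ℕ) :
    a n ≤ (M * ρ ^ (n - N)) ^ q ^ n := by
  induction n using Nat.strong_induction_on with
  | _ n ih =>
  rcases lt_or_ge n N with hn | hn
  · simpa [Nat.sub_eq_zero_of_le hn.le] using hinit n hn
  obtain ⟨l, hl, hrec⟩ := hrec n hn
  obtain ⟨hl1, hld⟩ := mem_Icc.mp hl
  calc a n ≤ (ρ ^ d) ^ q ^ n * ((M * ρ ^ (n - l - N)) ^ q ^ (n - l)) ^ q ^ l :=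
        hrec.trans (by gcongr; exacts [ha _, ih _ (by omega)])
    _ = (M * ρ ^ (d + (n - l - N))) ^ q ^ n := by
        rw [← pow_mul (M * _), ← pow_add, Nat.sub_add_cancel (by omega : l ≤ n), ← mul_pow,
          pow_add]
        ring
    _ ≤ (M * ρ ^ (n - N)) ^ q ^ n := by
        gcongr ?_ ^ _
        exact mul_le_mul_of_nonneg_left (pow_le_pow_of_le_one hρ0 hρ1 (by omega)) hM

section eRec

variable {F : Type} [Field F] {abv : AbsoluteValue F ℝ} {q d : ℕ} {θ : F} {c : ℕ → F}

lemma abv_pow_sub_self (nonarch : IsNonarchimedean abv) (hθ : 1 < abv θ) {m : ℕ} (hm : 1 < m) :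
    abv (θ ^ m - θ) = abv θ ^ m := by
  rw [sub_eq_add_neg, nonarch.add_eq_left_of_lt, map_pow]
  simpa using pow_lt_pow_right₀ hθ hm

lemma exists_abv_eRec_succ_mul_le (nonarch : IsNonarchimedean abv) (hq : 2 ≤ q) (hd : 1 ≤ d)
    (hθ : 1 < abv θ) (n : ℕ) :
    ∃ l ∈ Icc 1 d, abv (eRec F q d θ c (n + 1)) * abv θ ^ q ^ (n + 1) ≤
      abv (c l) * abv (eRec F q d θ c (n + 1 - l)) ^ q ^ l := by
  obtain ⟨l, hl, hsum⟩ := nonarch.finset_image_add_of_nonempty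
    (fun l => if _ : 1 ≤ l ∧ l ≤ n + 1 then c l * eRec F q d θ c (n + 1 - l) ^ q ^ l else 0)
    (nonempty_Icc.mpr hd)
  refine ⟨l, hl, ?_⟩
  have hθpow : 0 < abv θ ^ q ^ (n + 1) := pow_pos (one_pos.trans hθ) _
  rw [eRec, map_mul, map_inv₀, abv_pow_sub_self nonarch hθ (Nat.one_lt_pow (by omega) hq),
    mul_comm, mul_inv_cancel_left₀ hθpow.ne']
  refine hsum.trans ?_
  split_ifs
  · rw [map_mul, map_pow]
  · rw [map_zero]
    positivity

lemma exists_abv_eRec_succ_le (nonarch : IsNonarchimedean abv) (hq : 2 ≤ q) (hd : 1 ≤ d)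
    (hθ : 1 < abv θ) {s : ℝ} (n : ℕ)
    (hcoeff : ∑ l ∈ Icc 1 d, abv (c l) ≤ (s * abv θ) ^ q ^ (n + 1)) :
    ∃ l ∈ Icc 1 d, abv (eRec F q d θ c (n + 1)) ≤
      s ^ q ^ (n + 1) * abv (eRec F q d θ c (n + 1 - l)) ^ q ^ l := by
  obtain ⟨l, hl, hrec⟩ := exists_abv_eRec_succ_mul_le (c := c) nonarch hq hd hθ n
  refine ⟨l, hl, le_of_mul_le_mul_right ?_ (pow_pos (one_pos.trans hθ) (q ^ (n + 1)))⟩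
  calc _ ≤ abv (c l) * abv (eRec F q d θ c (n + 1 - l)) ^ q ^ l := hrec
    _ ≤ (s * abv θ) ^ q ^ (n + 1) * abv (eRec F q d θ c (n + 1 - l)) ^ q ^ l := by
        gcongr
        exact (single_le_sum (fun l _ => abv.nonneg (c l)) hl).trans hcoeff
    _ = _ := by ring

end eRec

theorem abs_exp_coeff_le_geom
    (F : Type) [Field F] (abv : AbsoluteValue F ℝ)
    (nonarch : ∀ x y : F, abv (x + y) ≤ max (abv x) (abv y))
    (q d : ℕ) (hq : 2 ≤ q) (hd : 1 ≤ d)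
    (θ : F) (hθ : 1 < abv θ) (c : ℕ → F) :
    ∃ (n₀ : ℕ) (r : ℝ), 0 < r ∧ r < 1 ∧
      ∀ n, n₀ ≤ n → abv (eRec F q d θ c n) ≤ r ^ (n * q ^ n) := by
  obtain ⟨ρ, hρ0, hρ1, hρθ⟩ := exists_pos_lt_one_lt_pow (inv_lt_one_of_one_lt₀ hθ) d
  have hgrowth : Tendsto (fun n => (ρ ^ d * abv θ) ^ q ^ n) atTop atTop :=
    (tendsto_pow_atTop_atTop_of_one_lt ((inv_lt_iff_one_lt_mul₀ (one_pos.trans hθ)).mp hρθ)).comp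
      (tendsto_pow_atTop_atTop_of_one_lt hq)
  obtain ⟨N₀, hN₀⟩ :=
    (hgrowth.eventually_ge_atTop (∑ l ∈ Icc 1 d, abv (c l))).exists_forall_of_atTop
  set N := max N₀ d
  set M := 1 + ∑ n ∈ range N, abv (eRec F q d θ c n)
  have hM : 1 ≤ M := le_add_of_nonneg_right (sum_nonneg fun _ _ => abv.nonneg _)
  have hinit (n : ℕ) (hn : n < N) : abv (eRec F q d θ c n) ≤ M ^ q ^ n :=
    calc abv (eRec F q d θ c n) ≤ M := (single_le_sum (fun n _ => abv.nonneg _)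
          (mem_range.mpr hn)).trans (le_add_of_nonneg_left zero_le_one)
      _ ≤ M ^ q ^ n := le_self_pow₀ hM (by positivity)
  have hbound := le_mul_pow_sub_pow_of_le_pow_mul_pow (fun n => abv.nonneg (eRec F q d θ c n))
    hρ0.le hρ1.le (zero_le_one.trans hM) (le_max_right N₀ d) hinit fun n hn => by
      obtain ⟨m, rfl⟩ : ∃ m, n = m + 1 := ⟨n - 1, by omega⟩
      exact exists_abv_eRec_succ_le nonarch hq hd hθ m (hN₀ _ (by omega))
  obtain ⟨r, hr0, hr1, hr⟩ := exists_lt_one_eventually_mul_pow_sub_le_pow hρ0 hρ1 M N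
  obtain ⟨n₀, hn₀⟩ := hr.exists_forall_of_atTop
  refine ⟨n₀, r, hr0, hr1, fun n hn => ?_⟩
  calc abv (eRec F q d θ c n) ≤ (M * ρ ^ (n - N)) ^ q ^ n := hbound n
    _ ≤ (r ^ n) ^ q ^ n := pow_le_pow_left₀ (by positivity) (hn₀ n hn) _
    _ = r ^ (n * q ^ n) := (pow_mul _ _ _).symm

end
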